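/- Let s, t ∈ O* be schedules such that [s] ≤ [t] as traces, i.e., there exists a schedule u with s·u ~ t. Then for every occurrence o^(i) in s, ret*(o^(i), s) = ret*(o^(i), t); that is, return values of operation occurrences are invariant under trace extension. -/

import Mathlib

open Classical

universe u v w

/-- Operations `a` and `b` commute in state `q`. -/
def CommuteIn {Q : Type u} {O : Type v} {R : Type w}
    (σ : O → Q → R × Q) (a b : O) (q : Q) : Prop :=
  ∃ (ra rb : R) (q1 q2 q' : Q),
    σ a q = (ra, q1) ∧ σ b q1 = (rb, q') ∧ σ b q = (rb, q2) ∧ σ a q2 = (ra, q')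

/-- Operations `a` and `b` conflict: they fail to commute in some state. -/
def Conflict {Q : Type u} {O : Type v} {R : Type w}
    (σ : O → Q → R × Q) (a b : O) : Prop :=
  ∃ q : Q, ¬ CommuteIn σ a b q

/-- Position in `s` of the `i`-th (0-indexed) occurrence of `o`, if it exists. -/
noncomputable def occIdx {O : Type v} (s : List O) (o : O) (i : ℕ) : Option ℕ :=
  ((List.range s.length).filter (fun k => decide (s[k]? = some o)))[i]?

/-- The `i`-th occurrence of `a` precedes the `j`-th occurrence of `b` in `s`. -/
def Precedes {O : Type v} (s : List O) (a : O) (i : ℕ) (b : O) (j : ℕ) : Prop :=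
  ∃ p q : ℕ, occIdx s a i = some p ∧ occIdx s b j = some q ∧ p < q

/-- Schedule equivalence: same multiset of operations, and the relative order of
any two occurrences of conflicting operations is the same. -/
def ScheduleEquiv {Q : Type u} {O : Type v} {R : Type w}
    (σ : O → Q → R × Q) (s s' : List O) : Prop :=
  (↑s : Multiset O) = (↑s' : Multiset O) ∧
  ∀ (a b : O) (i j : ℕ), Conflict σ a b →
    (Precedes s a i b j ↔ Precedes s' a i b j)

/-- `~` is an equivalence relation (proved here to form the quotient). -/
def scheduleSetoid {Q : Type u} {O : Type v} {R : Type w}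
    (σ : O → Q → R × Q) : Setoid (List O) :=
  ⟨ScheduleEquiv σ,
    ⟨fun _ => ⟨rfl, fun _ _ _ _ _ => Iff.rfl⟩,
     fun h => ⟨h.1.symm, fun a b i j hc => (h.2 a b i j hc).symm⟩,
     fun h h' => ⟨h.1.trans h'.1, fun a b i j hc => (h.2 a b i j hc).trans (h'.2 a b i j hc)⟩⟩⟩

/-- Traces: equivalence classes of schedules. -/
def Trace {Q : Type u} {O : Type v} {R : Type w} (σ : O → Q → R × Q) :=
  Quotient (scheduleSetoid σ)

/-- Prefix order on traces. -/
def TraceLe {Q : Type u} {O : Type v} {R : Type w}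
    (σ : O → Q → R × Q) (x y : Trace σ) : Prop :=
  ∃ s u : List O, x = Quotient.mk (scheduleSetoid σ) s ∧
    y = Quotient.mk (scheduleSetoid σ) (s ++ u)

/-- Executing a schedule from state `q`. -/
def execTrace {Q : Type u} {O : Type v} {R : Type w}
    (σ : O → Q → R × Q) : List O → Q → List (R × Q)
  | [], _ => []
  | o :: s, q => (σ o q) :: execTrace σ s (σ o q).2

/-- Return value of the `i`-th (0-indexed) occurrence of `o` in `s`,
executed from the initial state `q0`. -/
noncomputable def retStar {Q : Type u} {O : Type v} {R : Type w}
    (σ : O → Q → R × Q) (q0 : Q) (o : O) (i : ℕ) (s : List O) : Option R :=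
  (occIdx s o i).bind fun k => ((execTrace σ s q0)[k]?).map Prod.fst

/-! ### Auxiliary lemmas -/

section Aux

variable {Q : Type u} {O : Type v} {R : Type w}

lemma aux_getElem?_isSome {α : Type*} (l : List α) (i : ℕ) :
    l[i]?.isSome ↔ i < l.length := by
  constructor
  · intro h; by_contra hlt
    rw [List.getElem?_eq_none (Nat.le_of_not_lt hlt)] at h; simp at h
  · intro h; rw [List.getElem?_eq_getElem h]; rfl

lemma posList_cons (x : O) (s : List O) (o : O) :
    (List.range (x::s).length).filter (fun k => decide ((x::s)[k]? = some o)) =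
    (if x = o then [0] else []) ++
      ((List.range s.length).filter (fun k => decide (s[k]? = some o))).map (·+1) := by
  have h1 : (x::s).length = s.length + 1 := rfl
  rw [h1, List.range_succ_eq_map, List.filter_cons]
  have h2 : ((List.range s.length).map Nat.succ).filter (fun k => decide ((x::s)[k]? = some o))
      = ((List.range s.length).filter
          ((fun k => decide ((x::s)[k]? = some o)) ∘ Nat.succ)).map Nat.succ :=
    List.filter_map
  rw [h2]
  have h3 : ((fun k => decide ((x::s)[k]? = some o)) ∘ Nat.succ)
      = (fun k => decide (s[k]? = some o)) := by
    funext k; simp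
  rw [h3]
  have h4 : ((List.range s.length).filter (fun k => decide (s[k]? = some o))).map Nat.succ
      = ((List.range s.length).filter (fun k => decide (s[k]? = some o))).map (·+1) := by
    apply List.map_congr_left; intro k _; exact rfl
  rw [h4]
  by_cases hxo : x = o <;> simp [hxo]

lemma occIdx_cons_self_zero (o : O) (s : List O) : occIdx (o::s) o 0 = some 0 := by
  unfold occIdx; rw [posList_cons]; simp

lemma occIdx_cons_self_succ (o : O) (s : List O) (i : ℕ) :
    occIdx (o::s) o (i+1) = (occIdx s o i).map (·+1) := by
  unfold occIdx; rw [posList_cons]; simp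

lemma occIdx_cons_ne {x o : O} (h : x ≠ o) (s : List O) (i : ℕ) :
    occIdx (x::s) o i = (occIdx s o i).map (·+1) := by
  unfold occIdx; rw [posList_cons]; simp [h]

lemma occIdx_isSome_iff (s : List O) (o : O) (i : ℕ) :
    (occIdx s o i).isSome ↔ i < s.count o := by
  unfold occIdx
  rw [aux_getElem?_isSome]
  congr! 1
  induction s with
  | nil => simp
  | cons x s ih =>
    rw [posList_cons, List.length_append, List.length_map, ih, List.count_cons]
    by_cases hxo : x = o <;> simp [hxo] <;> omega

lemma occIdx_mem {s : List O} {o : O} {i p : ℕ} (h : occIdx s o i = some p) :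
    s[p]? = some o := by
  unfold occIdx at h
  have hm : p ∈ (List.range s.length).filter (fun k => decide (s[k]? = some o)) :=
    List.mem_of_getElem? h
  have := List.of_mem_filter hm
  simpa using this

lemma occIdx_exists_of_getElem {s : List O} {o : O} {k : ℕ} (h : s[k]? = some o) :
    ∃ j, occIdx s o j = some k := by
  have hk : k < s.length := (List.getElem?_eq_some_iff.mp h).1
  have hm : k ∈ (List.range s.length).filter (fun k => decide (s[k]? = some o)) := by
    rw [List.mem_filter]; exact ⟨List.mem_range.mpr hk, by simpa using h⟩
  exact List.getElem?_of_mem hm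

lemma occIdx_cons_shift (x b : O) (s : List O) (i : ℕ) :
    occIdx (x::s) b (if b = x then i+1 else i) = (occIdx s b i).map (·+1) := by
  by_cases h : b = x
  · subst h; simp only [if_pos rfl]; exact occIdx_cons_self_succ b s i
  · simp only [if_neg h]; exact occIdx_cons_ne (fun e => h e.symm) s i

lemma precedes_cons_shift (x b c : O) (s : List O) (i j : ℕ) :
    Precedes (x::s) b (if b = x then i+1 else i) c (if c = x then j+1 else j) ↔
      Precedes s b i c j := by
  constructor
  · rintro ⟨p, q, hp, hq, hlt⟩
    rw [occIdx_cons_shift] at hp hq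
    obtain ⟨p', hp', rfl⟩ := Option.map_eq_some_iff.mp hp
    obtain ⟨q', hq', rfl⟩ := Option.map_eq_some_iff.mp hq
    exact ⟨p', q', hp', hq', by omega⟩
  · rintro ⟨p, q, hp, hq, hlt⟩
    exact ⟨p+1, q+1, by rw [occIdx_cons_shift, hp]; rfl,
      by rw [occIdx_cons_shift, hq]; rfl, by omega⟩

lemma count_eq_of_multiset {s t : List O} (h : (↑s : Multiset O) = (↑t : Multiset O)) (o : O) :
    s.count o = t.count o := by
  have := congrArg (Multiset.count o) h; simpa using this

lemma commuteIn_symm {σ : O → Q → R × Q} {a b : O} {q : Q}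
    (h : CommuteIn σ a b q) : CommuteIn σ b a q := by
  obtain ⟨ra, rb, q1, q2, q', h1, h2, h3, h4⟩ := h
  exact ⟨rb, ra, q2, q1, q', h3, h4, h1, h2⟩

lemma conflict_symm {σ : O → Q → R × Q} {a b : O} (h : Conflict σ a b) : Conflict σ b a := by
  obtain ⟨q, hq⟩ := h
  exact ⟨q, fun hc => hq (commuteIn_symm hc)⟩

lemma commute_of_not_conflict {σ : O → Q → R × Q} {a b : O} (h : ¬ Conflict σ a b) :
    ∀ q, CommuteIn σ a b q := by
  intro q; by_contra hq; exact h ⟨q, hq⟩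

lemma scheduleEquiv_trans {σ : O → Q → R × Q} {s t r : List O}
    (h1 : ScheduleEquiv σ s t) (h2 : ScheduleEquiv σ t r) : ScheduleEquiv σ s r :=
  ⟨h1.1.trans h2.1, fun a b i j hc => (h1.2 a b i j hc).trans (h2.2 a b i j hc)⟩

lemma retStar_cons_self_zero (σ : O → Q → R × Q) (q0 : Q) (a : O) (s : List O) :
    retStar σ q0 a 0 (a::s) = some (σ a q0).1 := by
  unfold retStar
  rw [occIdx_cons_self_zero]
  simp [execTrace]

lemma retStar_cons_self_succ (σ : O → Q → R × Q) (q0 : Q) (a : O) (s : List O) (i : ℕ) :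
    retStar σ q0 a (i+1) (a::s) = retStar σ (σ a q0).2 a i s := by
  unfold retStar
  rw [occIdx_cons_self_succ]
  cases h : occIdx s a i <;> simp [execTrace]

lemma retStar_cons_ne {x o : O} (h : x ≠ o) (σ : O → Q → R × Q) (q0 : Q) (s : List O) (i : ℕ) :
    retStar σ q0 o i (x::s) = retStar σ (σ x q0).2 o i s := by
  unfold retStar
  rw [occIdx_cons_ne h]
  cases hh : occIdx s o i <;> simp [execTrace]

lemma occIdx_cons_shift' {x c : O} {j : ℕ} (h : ¬(c = x ∧ j = 0)) (s : List O) :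
    occIdx (x::s) c j = (occIdx s c (if c = x then j - 1 else j)).map (·+1) := by
  by_cases h1 : c = x
  · subst h1
    have hj : j ≠ 0 := fun e => h ⟨rfl, e⟩
    obtain ⟨j', rfl⟩ := Nat.exists_eq_succ_of_ne_zero hj
    simp only [if_pos rfl, Nat.succ_sub_one]
    exact occIdx_cons_self_succ ..
  · simp only [if_neg h1]; exact occIdx_cons_ne (fun e => h1 e.symm) ..

lemma precedes_cons_shift' {x b c : O} {i j : ℕ} (s : List O)
    (hb : ¬(b = x ∧ i = 0)) (hc : ¬(c = x ∧ j = 0)) :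
    Precedes (x::s) b i c j ↔
      Precedes s b (if b = x then i - 1 else i) c (if c = x then j - 1 else j) := by
  unfold Precedes
  rw [occIdx_cons_shift' hb, occIdx_cons_shift' hc]
  constructor
  · rintro ⟨p, q, hp, hq, hlt⟩
    obtain ⟨p', hp', rfl⟩ := Option.map_eq_some_iff.mp hp
    obtain ⟨q', hq', rfl⟩ := Option.map_eq_some_iff.mp hq
    exact ⟨p', q', hp', hq', by omega⟩
  · rintro ⟨p, q, hp, hq, hlt⟩
    exact ⟨p+1, q+1, by rw [hp]; rfl, by rw [hq]; rfl, by omega⟩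

lemma scheduleEquiv_cons {σ : O → Q → R × Q} {s t : List O} (x : O)
    (h : ScheduleEquiv σ s t) : ScheduleEquiv σ (x::s) (x::t) := by
  obtain ⟨hm, hp⟩ := h
  have hcount : ∀ o : O, s.count o = t.count o := count_eq_of_multiset hm
  refine ⟨by rw [← Multiset.cons_coe, ← Multiset.cons_coe, hm], ?_⟩
  intro b c i j hc
  by_cases hcj : c = x ∧ j = 0
  · obtain ⟨rfl, rfl⟩ := hcj
    constructor <;> rintro ⟨p, q, hp', hq', hlt⟩ <;>
      (rw [occIdx_cons_self_zero] at hq'; injection hq' with hq''; omega)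
  · by_cases hbi : b = x ∧ i = 0
    · obtain ⟨rfl, rfl⟩ := hbi
      have key : ∀ r : List O,
          Precedes (b::r) b 0 c j ↔ (occIdx r c (if c = b then j - 1 else j)).isSome := by
        intro r
        constructor
        · rintro ⟨p, q, hp', hq', hlt⟩
          rw [occIdx_cons_shift' hcj] at hq'
          obtain ⟨q', hq'', rfl⟩ := Option.map_eq_some_iff.mp hq'
          rw [hq'']; rfl
        · intro hq
          obtain ⟨q', hq'⟩ := Option.isSome_iff_exists.mp hq
          refine ⟨0, q'+1, occIdx_cons_self_zero .., ?_, by omega⟩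
          rw [occIdx_cons_shift' hcj, hq']; rfl
      rw [key s, key t, occIdx_isSome_iff, occIdx_isSome_iff, hcount]
    · rw [precedes_cons_shift' s hbi hcj, precedes_cons_shift' t hbi hcj]
      exact hp b c _ _ hc

lemma scheduleEquiv_tail {σ : O → Q → R × Q} {x : O} {s t : List O}
    (h : ScheduleEquiv σ (x::s) (x::t)) : ScheduleEquiv σ s t := by
  obtain ⟨hm, hp⟩ := h
  constructor
  · rw [← Multiset.cons_coe, ← Multiset.cons_coe] at hm
    exact (Multiset.cons_inj_right x).mp hm
  · intro b c i j hc
    have := hp b c (if b = x then i+1 else i) (if c = x then j+1 else j) hc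
    rwa [precedes_cons_shift, precedes_cons_shift] at this

lemma retStar_cons_congr {σ : O → Q → R × Q} {s t : List O} (x : O)
    (H : ∀ (q0 : Q) (o : O) (i : ℕ), retStar σ q0 o i s = retStar σ q0 o i t) :
    ∀ (q0 : Q) (o : O) (i : ℕ), retStar σ q0 o i (x::s) = retStar σ q0 o i (x::t) := by
  intro q0 o i
  by_cases hox : o = x
  · subst hox
    cases i with
    | zero => rw [retStar_cons_self_zero, retStar_cons_self_zero]
    | succ i => rw [retStar_cons_self_succ, retStar_cons_self_succ]; exact H ..
  · rw [retStar_cons_ne (fun e => hox e.symm), retStar_cons_ne (fun e => hox e.symm)]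
    exact H ..

def swapf (p : ℕ) : ℕ := if p = 0 then 1 else if p = 1 then 0 else p

lemma swapf_lt {p q : ℕ} (h1 : ¬(p = 0 ∧ q = 1)) (h2 : ¬(p = 1 ∧ q = 0)) :
    (swapf p < swapf q ↔ p < q) := by
  unfold swapf; split_ifs <;> omega

lemma occIdx_swap {a b : O} (hab : a ≠ b) (w : List O) (o : O) (i : ℕ) :
    occIdx (a::b::w) o i = (occIdx (b::a::w) o i).map swapf := by
  have hba : b ≠ a := Ne.symm hab
  by_cases hoa : o = a
  · subst hoa
    cases i with
    | zero =>
      rw [occIdx_cons_self_zero, occIdx_cons_ne hba, occIdx_cons_self_zero]; rfl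
    | succ i =>
      rw [occIdx_cons_self_succ, occIdx_cons_ne hba, occIdx_cons_ne hba,
        occIdx_cons_self_succ]
      cases occIdx w o i <;> simp [swapf]
  · by_cases hob : o = b
    · subst hob
      cases i with
      | zero =>
        rw [occIdx_cons_ne hab, occIdx_cons_self_zero, occIdx_cons_self_zero]; rfl
      | succ i =>
        rw [occIdx_cons_ne hab, occIdx_cons_self_succ, occIdx_cons_self_succ,
          occIdx_cons_ne hab]
        cases occIdx w o i <;> simp [swapf]
    · have h1 : a ≠ o := fun e => hoa e.symm
      have h2 : b ≠ o := fun e => hob e.symm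
      rw [occIdx_cons_ne h1, occIdx_cons_ne h2, occIdx_cons_ne h2, occIdx_cons_ne h1]
      cases occIdx w o i <;> simp [swapf]

lemma getElem_zero_swap {b a : O} {w : List O} {c : O} {i : ℕ}
    (h : occIdx (b::a::w) c i = some 0) : c = b := by
  have := occIdx_mem h
  simp at this; exact this.symm

lemma getElem_one_swap {b a : O} {w : List O} {c : O} {i : ℕ}
    (h : occIdx (b::a::w) c i = some 1) : c = a := by
  have := occIdx_mem h
  simp at this; exact this.symm

lemma swap_equiv {σ : O → Q → R × Q} {a b : O} (h : ¬ Conflict σ a b) (w : List O) :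
    ScheduleEquiv σ (b::a::w) (a::b::w) := by
  by_cases hab : a = b
  · subst hab; exact ⟨rfl, fun _ _ _ _ _ => Iff.rfl⟩
  refine ⟨?_, ?_⟩
  · rw [← Multiset.cons_coe, ← Multiset.cons_coe, ← Multiset.cons_coe, ← Multiset.cons_coe]
    exact Multiset.cons_swap b a (↑w)
  intro c d i j hc
  constructor
  · rintro ⟨p, q, hp', hq', hlt⟩
    refine ⟨swapf p, swapf q, ?_, ?_, ?_⟩
    · rw [occIdx_swap hab, hp']; rfl
    · rw [occIdx_swap hab, hq']; rfl
    · rw [swapf_lt ?g1 ?g2]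
      · exact hlt
      case g1 =>
        rintro ⟨rfl, rfl⟩
        have hcb : c = b := getElem_zero_swap hp'
        have hda : d = a := getElem_one_swap hq'
        subst hcb; subst hda
        exact h (conflict_symm hc)
      case g2 => omega
  · rintro ⟨p, q, hp', hq', hlt⟩
    rw [occIdx_swap hab] at hp' hq'
    obtain ⟨p', hp'', rfl⟩ := Option.map_eq_some_iff.mp hp'
    obtain ⟨q', hq'', rfl⟩ := Option.map_eq_some_iff.mp hq'
    refine ⟨p', q', hp'', hq'', ?_⟩
    rw [← swapf_lt ?g1 ?g2]
    · exact hlt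
    case g1 =>
      rintro ⟨rfl, rfl⟩
      simp [swapf] at hlt
    case g2 =>
      rintro ⟨rfl, rfl⟩
      have hca : c = a := getElem_one_swap hp''
      have hdb : d = b := getElem_zero_swap hq''
      subst hca; subst hdb
      exact h hc

lemma swap_ret {σ : O → Q → R × Q} {a b : O} (h : ¬ Conflict σ a b) (w : List O) :
    ∀ (q0 : Q) (o : O) (i : ℕ),
      retStar σ q0 o i (b::a::w) = retStar σ q0 o i (a::b::w) := by
  by_cases hab : a = b
  · subst hab; intro _ _ _; rfl
  have hba : b ≠ a := Ne.symm hab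
  intro q0 o i
  obtain ⟨ra, rb, q1, q2, q', h1, h2, h3, h4⟩ := commute_of_not_conflict h q0
  by_cases hoa : o = a
  · subst hoa
    cases i with
    | zero =>
      rw [retStar_cons_ne hba, retStar_cons_self_zero, retStar_cons_self_zero,
        h3, h1]
      simp [h4]
    | succ i =>
      rw [retStar_cons_ne hba, retStar_cons_self_succ, retStar_cons_self_succ,
        retStar_cons_ne hba, h3, h1, h4, h2]
  · by_cases hob : o = b
    · subst hob
      cases i with
      | zero =>
        rw [retStar_cons_self_zero, retStar_cons_ne hab, retStar_cons_self_zero,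
          h3, h1]
        simp [h2]
      | succ i =>
        rw [retStar_cons_self_succ, retStar_cons_ne hab, retStar_cons_ne hab,
          retStar_cons_self_succ, h3, h1, h4, h2]
    · have h5 : a ≠ o := fun e => hoa e.symm
      have h6 : b ≠ o := fun e => hob e.symm
      rw [retStar_cons_ne h6, retStar_cons_ne h5, retStar_cons_ne h5,
        retStar_cons_ne h6, h3, h1, h4, h2]

lemma exists_first_occ {a : O} {t : List O} (h : a ∈ t) :
    ∃ t1 t2 : List O, t = t1 ++ a :: t2 ∧ a ∉ t1 := by
  induction t with
  | nil => cases h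
  | cons x r ih =>
    by_cases hxa : x = a
    · exact ⟨[], r, by rw [hxa]; rfl, by simp⟩
    · have hr : a ∈ r := by
        rcases List.mem_cons.mp h with h' | h'
        · exact absurd h'.symm hxa
        · exact h'
      obtain ⟨t1, t2, rfl, hn⟩ := ih hr
      refine ⟨x::t1, t2, rfl, ?_⟩
      intro hm
      rcases List.mem_cons.mp hm with h' | h'
      · exact hxa h'.symm
      · exact hn h'

lemma occIdx_first {a : O} (t1 t2 : List O) (h : a ∉ t1) :
    occIdx (t1 ++ a :: t2) a 0 = some t1.length := by
  induction t1 with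
  | nil => exact occIdx_cons_self_zero ..
  | cons x r ih =>
    have hxa : x ≠ a := fun e => h (e ▸ List.mem_cons_self ..)
    rw [List.cons_append, occIdx_cons_ne hxa,
      ih (fun hm => h (List.mem_cons_of_mem _ hm))]
    rfl

lemma bubble {σ : O → Q → R × Q} (a : O) (t2 : List O) :
    ∀ t1 : List O, (∀ b ∈ t1, ¬ Conflict σ a b) →
      ScheduleEquiv σ (t1 ++ a :: t2) (a :: (t1 ++ t2)) ∧
      (∀ (q0 : Q) (o : O) (i : ℕ),
        retStar σ q0 o i (t1 ++ a :: t2) = retStar σ q0 o i (a :: (t1 ++ t2))) := by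
  intro t1
  induction t1 with
  | nil =>
    intro _
    exact ⟨⟨rfl, fun _ _ _ _ _ => Iff.rfl⟩, fun _ _ _ => rfl⟩
  | cons b r ih =>
    intro hb
    obtain ⟨he, hr⟩ := ih (fun c hc => hb c (List.mem_cons_of_mem _ hc))
    have hnc : ¬ Conflict σ a b := hb b (List.mem_cons_self ..)
    constructor
    · refine scheduleEquiv_trans (scheduleEquiv_cons b he) ?_
      exact swap_equiv hnc (r ++ t2)
    · intro q0 o i
      calc retStar σ q0 o i (b :: (r ++ a :: t2))
          = retStar σ q0 o i (b :: a :: (r ++ t2)) := retStar_cons_congr b hr q0 o i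
        _ = retStar σ q0 o i (a :: b :: (r ++ t2)) := swap_ret hnc (r ++ t2) q0 o i

lemma retStar_eq_of_equiv {σ : O → Q → R × Q} (s : List O) :
    ∀ t : List O, ScheduleEquiv σ s t →
      ∀ (q0 : Q) (o : O) (i : ℕ), retStar σ q0 o i s = retStar σ q0 o i t := by
  induction s with
  | nil =>
    intro t h q0 o i
    have ht : t = [] := by
      have := h.1
      have h0 : (↑t : Multiset O) = 0 := by simpa using this.symm
      simpa using h0
    subst ht; rfl
  | cons a s1 ih =>
    intro t h q0 o i
    have ha : a ∈ t := by
      have hm := h.1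
      have : a ∈ (↑t : Multiset O) := by rw [← hm]; simp
      simpa using this
    obtain ⟨t1, t2, rfl, hnot⟩ := exists_first_occ ha
    have hb : ∀ b ∈ t1, ¬ Conflict σ a b := by
      intro b hbmem hconf
      have hconf' : Conflict σ b a := conflict_symm hconf
      obtain ⟨k, hk⟩ := List.getElem?_of_mem hbmem
      have hklen : k < t1.length := (List.getElem?_eq_some_iff.mp hk).1
      have hkt : (t1 ++ a :: t2)[k]? = some b := by
        rw [List.getElem?_append_left hklen]; exact hk
      obtain ⟨j, hj⟩ := occIdx_exists_of_getElem hkt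
      have hPrec : Precedes (t1 ++ a :: t2) b j a 0 :=
        ⟨k, t1.length, hj, occIdx_first t1 t2 hnot, hklen⟩
      obtain ⟨p, q, hp', hq', hlt⟩ := (h.2 b a j 0 hconf').mpr hPrec
      rw [occIdx_cons_self_zero] at hq'
      injection hq' with hq''
      omega
    obtain ⟨he, hr⟩ := bubble a t2 t1 hb
    have htr : ScheduleEquiv σ (a::s1) (a :: (t1 ++ t2)) := scheduleEquiv_trans h he
    have htail := scheduleEquiv_tail htr
    rw [hr q0 o i]
    exact retStar_cons_congr a (fun q0' o' i' => ih (t1 ++ t2) htail q0' o' i') q0 o i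

lemma posList_prefix (s u : List O) (o : O) :
    ∃ L : List ℕ, (List.range (s ++ u).length).filter (fun k => decide ((s ++ u)[k]? = some o))
      = ((List.range s.length).filter (fun k => decide (s[k]? = some o))) ++ L := by
  rw [List.length_append, List.range_add, List.filter_append]
  have hfc : (List.range s.length).filter (fun k => decide ((s ++ u)[k]? = some o))
      = (List.range s.length).filter (fun k => decide (s[k]? = some o)) := by
    apply List.filter_congr
    intro k hk
    have hk' : k < s.length := List.mem_range.mp hk
    simp only [List.getElem?_append_left hk']
  rw [hfc]
  exact ⟨_, rfl⟩

lemma occIdx_append_left {s : List O} {o : O} {i : ℕ} (u : List O)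
    (h : (occIdx s o i).isSome) : occIdx (s ++ u) o i = occIdx s o i := by
  obtain ⟨L, hL⟩ := posList_prefix s u o
  unfold occIdx at h ⊢
  rw [hL]
  have hi : i < ((List.range s.length).filter (fun k => decide (s[k]? = some o))).length :=
    (aux_getElem?_isSome _ _).mp h
  rw [List.getElem?_append_left hi]

lemma execTrace_length (σ : O → Q → R × Q) : ∀ (s : List O) (q : Q),
    (execTrace σ s q).length = s.length := by
  intro s
  induction s with
  | nil => intro q; rfl
  | cons a s ih => intro q; simp [execTrace, ih]

lemma execTrace_append (σ : O → Q → R × Q) : ∀ (s : List O) (q : Q) (u : List O),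
    ∃ q' : Q, execTrace σ (s ++ u) q = execTrace σ s q ++ execTrace σ u q' := by
  intro s
  induction s with
  | nil => intro q u; exact ⟨q, rfl⟩
  | cons a s ih =>
    intro q u
    obtain ⟨q', hq'⟩ := ih (σ a q).2 u
    exact ⟨q', by simp [execTrace, hq']⟩

lemma retStar_append_left {σ : O → Q → R × Q} {q0 : Q} {s : List O} {o : O} {i : ℕ}
    (u : List O) (h : (occIdx s o i).isSome) :
    retStar σ q0 o i (s ++ u) = retStar σ q0 o i s := by
  obtain ⟨k, hk⟩ := Option.isSome_iff_exists.mp h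
  have hklen : k < s.length := (List.getElem?_eq_some_iff.mp (occIdx_mem hk)).1
  unfold retStar
  rw [occIdx_append_left u h, hk]
  obtain ⟨q', hq'⟩ := execTrace_append σ s q0 u
  simp only [Option.bind_some]
  rw [hq', List.getElem?_append_left (by rw [execTrace_length]; exact hklen)]

end Aux

/-- if `[s] ≤ [t]` as traces (some `u` satisfies `s·u ~ t`),
then the return value of every operation occurrence of `s` is the same in `s`
and in `t`: return values are invariant under trace extension. -/
theorem retStar_eq_of_trace_prefix
    {Q : Type u} {O : Type v} {R : Type w}
    (σ : O → Q → R × Q) (q0 : Q) (s t : List O)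
    (h : ∃ u : List O, ScheduleEquiv σ (s ++ u) t) :
    ∀ (o : O) (i : ℕ), (occIdx s o i).isSome →
      retStar σ q0 o i s = retStar σ q0 o i t := by
  obtain ⟨u, he⟩ := h
  intro o i hi
  have h1 := retStar_eq_of_equiv (s ++ u) t he q0 o i
  exact (retStar_append_left u hi).symm.trans h1
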